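/- If p : X̃ → X is a covering map with X̃ a small loop space and p(x̃) = x, then π₁ˢ(X,x) = π₁ˢᵍ(X,x) = p₋(π₁(X̃, x̃)). -/

import Mathlib

open CategoryTheory Topology

attribute [local instance] Path.Homotopic.setoid

noncomputable section

variable {X Y E : Type*} [TopologicalSpace X] [TopologicalSpace Y] [TopologicalSpace E]

/-- Build an element of the fundamental group from a homotopy class of loops. -/
def fromLoop {x : X} (p : Path.Homotopic.Quotient x x) : FundamentalGroup X x :=
  FundamentalGroup.fromPath p

/-- The homotopy class of loops underlying an element of the fundamental group. -/
def toLoop {x : X} (γ : FundamentalGroup X x) : Path.Homotopic.Quotient x x :=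
  FundamentalGroup.toPath γ

/-- A fundamental group element is *small* if it has a loop representative inside every
neighborhood of the basepoint. -/
def IsSmall {x : X} (γ : FundamentalGroup X x) : Prop :=
  ∀ U ∈ nhds x, ∃ δ : Path x x, (∀ t, δ t ∈ U) ∧ fromLoop ⟦δ⟧ = γ

/-- The set of small loop classes, i.e. the carrier of the small loop group `π₁ˢ(X,x)`. -/
def smallSet (X : Type*) [TopologicalSpace X] (x : X) : Set (FundamentalGroup X x) :=
  {γ | IsSmall γ}

/-- Conjugate of a loop class at `y` by a path `α` from `x` to `y`: `α * β * α⁻¹`. -/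
def conjPath {x y : X} (α : Path x y) (β : FundamentalGroup X y) : FundamentalGroup X x :=
  fromLoop (Path.Homotopic.Quotient.trans
    (Path.Homotopic.Quotient.trans (⟦α⟧ : Path.Homotopic.Quotient x y) (toLoop β))
    (⟦α.symm⟧ : Path.Homotopic.Quotient y x))

/-- The SG subgroup `π₁ˢᵍ(X,x)`: generated by conjugates of small loop classes. -/
def sgSubgroup (X : Type*) [TopologicalSpace X] (x : X) : Subgroup (FundamentalGroup X x) :=
  Subgroup.closure {g | ∃ (y : X) (α : Path x y) (β : FundamentalGroup X y), IsSmall β ∧ g = conjPath α β}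

/-- The map induced on fundamental groups by a continuous map. -/
def piMap (f : C(X, Y)) (x : X) (γ : FundamentalGroup X x) : FundamentalGroup Y (f x) :=
  fromLoop (Path.Homotopic.Quotient.map (toLoop γ) f)

/-- A small loop space: a path-connected, non-simply connected space all of whose loops
are small. -/
def IsSmallLoopSpace (X : Type*) [TopologicalSpace X] : Prop :=
  PathConnectedSpace X ∧ ¬ SimplyConnectedSpace X ∧
    ∀ (x : X) (γ : FundamentalGroup X x), IsSmall γ

/-- A space is homotopically Hausdorff if every nontrivial loop class can be kept away from
some neighborhood of its basepoint. -/
def HomotopicallyHausdorff (X : Type*) [TopologicalSpace X] : Prop :=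
  ∀ (x : X) (γ : FundamentalGroup X x), γ ≠ 1 →
    ∃ U ∈ nhds x, ∀ δ : Path x x, (∀ t, δ t ∈ U) → fromLoop ⟦δ⟧ ≠ γ

/-- The image of `π₁(U,y) → π₁(X,y)`: classes of loops having a representative inside `U`. -/
def loopsIn (U : Set X) (y : X) : Set (FundamentalGroup X y) :=
  {γ | ∃ δ : Path y y, (∀ t, δ t ∈ U) ∧ fromLoop ⟦δ⟧ = γ}

/-- A semi-locally small loop space. -/
def SemiLocallySmallLoop (X : Type*) [TopologicalSpace X] : Prop :=
  ∀ x : X, ∃ U : Set X, IsOpen U ∧ x ∈ U ∧ ∀ y ∈ U, loopsIn U y = smallSet X y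

/-! A small loop of `X` has a representative inside an evenly covered neighbourhood of its
basepoint, where it lifts to a loop; so for any covering `π₁ˢ(X,x) ⊆ p₊π₁(X̃,x̃)`, and lifting the
conjugating paths as well gives `π₁ˢᵍ(X,x) ⊆ p₊π₁(X̃,x̃)`. Conversely continuous maps send small
loops to small loops, so if all loops of `X̃` are small then `p₊π₁(X̃,x̃) ⊆ π₁ˢ(X,x)`, which closes
the chain `π₁ˢ ⊆ π₁ˢᵍ ⊆ p₊π₁(X̃) ⊆ π₁ˢ`. -/

lemma conjPath_refl {x : X} (β : FundamentalGroup X x) : conjPath (Path.refl x) β = β := by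
  rw [conjPath, Path.refl_symm]
  change (𝟙 (FundamentalGroupoid.mk x) ≫ toLoop β) ≫ 𝟙 _ = β
  simp [toLoop]

lemma piMap_conjPath (f : C(X, Y)) {x y : X} (α : Path x y) (β : FundamentalGroup X y) :
    piMap f x (conjPath α β) = conjPath (α.map f.continuous) (piMap f y β) := by
  induction β using Quotient.inductionOn with
  | h δ => exact congrArg Path.Homotopic.Quotient.mk (by simp [Path.map_trans, Path.map_symm])

lemma IsSmall.map (f : C(X, Y)) {x : X} {γ : FundamentalGroup X x} (hγ : IsSmall γ) :
    IsSmall (piMap f x γ) := by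
  intro U hU
  obtain ⟨δ, hδU, rfl⟩ := hγ (f ⁻¹' U) (f.continuous.continuousAt.preimage_mem_nhds hU)
  exact ⟨δ.map f.continuous, hδU, rfl⟩

lemma IsSmall.mem_sgSubgroup {x : X} {γ : FundamentalGroup X x} (hγ : IsSmall γ) :
    γ ∈ sgSubgroup X x :=
  Subgroup.subset_closure ⟨x, Path.refl x, γ, hγ, (conjPath_refl γ).symm⟩

lemma Bundle.Trivialization.exists_loop_lift {F : Type*} [TopologicalSpace F] {p : C(E, X)}
    (T : Bundle.Trivialization F p) {e : E} (he : p e ∈ T.baseSet) (δ : Path (p e) (p e))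
    (hδ : ∀ t, δ t ∈ T.baseSet) : ∃ δ' : Path e e, δ'.map p.continuous = δ := by
  have hlift : T.toOpenPartialHomeomorph.symm (p e, (T e).2) = e :=
    T.symm_apply_mk_proj (T.mem_source.2 he)
  refine ⟨⟨⟨fun t ↦ T.toOpenPartialHomeomorph.symm (δ t, (T e).2),
    T.continuousOn_symm_prodMk_left.comp_continuous δ.continuous hδ⟩, ?_, ?_⟩, ?_⟩
  · simpa using hlift
  · simpa using hlift
  · ext t
    exact T.proj_symm_apply' (hδ t)

lemma IsCoveringMap.exists_path_lift {p : C(E, X)} (hp : IsCoveringMap p) (e : E) {y : X}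
    (α : Path (p e) y) : ∃ (e' : E) (A : Path e e'), ∀ t, p (A t) = α t := by
  obtain ⟨Γ, hΓ, hΓ0⟩ := hp.exists_path_lifts α.toContinuousMap e (by simp)
  exact ⟨Γ 1, ⟨Γ, hΓ0, rfl⟩, fun t ↦ congrFun hΓ t⟩

lemma IsSmall.mem_range_piMap {p : C(E, X)} (hp : IsCoveringMap p) {e : E}
    {γ : FundamentalGroup X (p e)} (hγ : IsSmall γ) : γ ∈ Set.range (piMap p e) := by
  have : Nonempty (p ⁻¹' {p e}) := ⟨⟨e, rfl⟩⟩
  let T := (hp (p e)).toTrivialization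
  have he : p e ∈ T.baseSet := (hp (p e)).mem_toTrivialization_baseSet
  obtain ⟨δ, hδT, rfl⟩ := hγ T.baseSet (T.open_baseSet.mem_nhds he)
  obtain ⟨δ', rfl⟩ := T.exists_loop_lift he δ hδT
  exact ⟨fromLoop ⟦δ'⟧, rfl⟩

lemma IsCoveringMap.sgSubgroup_le_range {p : C(E, X)} (hp : IsCoveringMap p) (e : E) :
    sgSubgroup X (p e) ≤ (FundamentalGroup.map p e).range := by
  refine (Subgroup.closure_le _).2 ?_
  rintro _ ⟨y, α, β, hβ, rfl⟩
  obtain ⟨e', A, hA⟩ := hp.exists_path_lift e α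
  obtain rfl : y = p e' := by rw [← α.target, ← hA 1, A.target]
  obtain rfl : α = A.map p.continuous := Path.ext (funext fun t ↦ (hA t).symm)
  obtain ⟨β', rfl⟩ := IsSmall.mem_range_piMap hp hβ
  exact ⟨conjPath A β', piMap_conjPath p A β'⟩

/-- if `p : X̃ → X` is a covering with `X̃` a small loop space and `p xt = x`,
then `π₁ˢ(X,x) = π₁ˢᵍ(X,x) = p₋(π₁(X̃, xt))`. -/
theorem smallSet_eq_sg_eq_range_of_small_covering {E X : Type*} [TopologicalSpace E]
    [TopologicalSpace X] (p : C(E, X)) (hp : IsCoveringMap p) (hE : IsSmallLoopSpace E)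
    (xt : E) :
    smallSet X (p xt) = (sgSubgroup X (p xt) : Set (FundamentalGroup X (p xt))) ∧
      (sgSubgroup X (p xt) : Set (FundamentalGroup X (p xt))) = Set.range (piMap p xt) := by
  have small_sub_sg : smallSet X (p xt) ⊆ sgSubgroup X (p xt) :=
    fun _ hγ ↦ IsSmall.mem_sgSubgroup hγ
  have sg_sub_range : (sgSubgroup X (p xt) : Set _) ⊆ Set.range (piMap p xt) :=
    fun _ hγ ↦ hp.sgSubgroup_le_range xt hγ
  have range_sub_small : Set.range (piMap p xt) ⊆ smallSet X (p xt) := by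
    rintro _ ⟨γ, rfl⟩
    exact (hE.2.2 xt γ).map p
  exact ⟨small_sub_sg.antisymm (sg_sub_range.trans range_sub_small),
    sg_sub_range.antisymm (range_sub_small.trans small_sub_sg)⟩

end
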